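/- arXiv:1209.6488 — 7 statements merged into one kernel-verified Lean document; each statement's English description precedes it below -/
import Mathlib

section
/- If S and S̃ are linear subspaces of ℝⁿ with equal sign vector sets, σ(S) = σ(S̃), then σ(S) ∩ σ(S̃^⊥) = {0}; consequently, for every c* > 0 and c' > 0, the set (c'+S) ∩ ℝⁿ_{≥0} ∩ { c* ∘ e^{ṽ} | ṽ ∈ S̃^⊥ } has at most one element. -/
open Finset

/-- componentwise sign vector -/
noncomputable def sgn {n : ℕ} (x : Fin n → ℝ) : Fin n → ℝ := fun i => Real.sign (x i)

/-- set of sign vectors of a set -/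
noncomputable def sgnSet {n : ℕ} (A : Set (Fin n → ℝ)) : Set (Fin n → ℝ) := sgn '' A

/-- standard dot product -/
noncomputable def dotp {m : ℕ} (x y : Fin m → ℝ) : ℝ := ∑ i, x i * y i

/-- orthogonal complement of a set, as a set -/
noncomputable def perpSet {n : ℕ} (A : Set (Fin n → ℝ)) : Set (Fin n → ℝ) :=
  {y | ∀ x ∈ A, dotp x y = 0}

lemma sign_mul_nonneg (a b : ℝ) (h : Real.sign a = Real.sign b) : 0 ≤ a * b := by
  rcases lt_trichotomy a 0 with ha | ha | ha
  · rw [Real.sign_of_neg ha] at h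
    rcases lt_trichotomy b 0 with hb | hb | hb
    · exact le_of_lt (mul_pos_of_neg_of_neg ha hb)
    · simp [hb]
    · rw [Real.sign_of_pos hb] at h; norm_num at h
  · simp [ha]
  · rw [Real.sign_of_pos ha] at h
    rcases lt_trichotomy b 0 with hb | hb | hb
    · rw [Real.sign_of_neg hb] at h; norm_num at h
    · simp [hb]
    · exact le_of_lt (mul_pos ha hb)

lemma eq_zero_of_sign_eq_of_mul_zero (a b : ℝ) (h : Real.sign a = Real.sign b)
    (hz : a * b = 0) : a = 0 := by
  rcases mul_eq_zero.mp hz with h0 | h0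
  · exact h0
  · rw [h0, Real.sign_zero] at h
    exact Real.sign_eq_zero_iff.mp h

lemma key_lemma {n : ℕ} (S St : Submodule ℝ (Fin n → ℝ))
    (h : sgnSet (S : Set (Fin n → ℝ)) = sgnSet (St : Set (Fin n → ℝ)))
    {u v : Fin n → ℝ} (hu : u ∈ S) (hv : v ∈ perpSet (St : Set (Fin n → ℝ)))
    (hsgn : sgn u = sgn v) : u = 0 := by
  have hmem : sgn u ∈ sgnSet (St : Set (Fin n → ℝ)) := by
    rw [← h]; exact ⟨u, hu, rfl⟩
  obtain ⟨x, hx, hxs⟩ := hmem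
  have hd : dotp x v = 0 := hv x hx
  have hsi : ∀ i, Real.sign (x i) = Real.sign (v i) := by
    intro i
    have h1 := congrFun hxs i
    have h2 := congrFun hsgn i
    simp only [sgn] at h1 h2
    rw [h1, h2]
  have hterm : ∀ i ∈ Finset.univ, 0 ≤ x i * v i := fun i _ => sign_mul_nonneg _ _ (hsi i)
  have hzero : ∀ i ∈ Finset.univ, x i * v i = 0 :=
    (Finset.sum_eq_zero_iff_of_nonneg hterm).mp hd
  funext i
  have hx0 : x i = 0 := eq_zero_of_sign_eq_of_mul_zero _ _ (hsi i) (hzero i (Finset.mem_univ i))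
  have : Real.sign (u i) = 0 := by
    have h1 := congrFun hxs i
    simp only [sgn] at h1
    rw [← h1, hx0, Real.sign_zero]
  exact Real.sign_eq_zero_iff.mp this

theorem stmt1 {n : ℕ} (S St : Submodule ℝ (Fin n → ℝ))
    (h : sgnSet (S : Set (Fin n → ℝ)) = sgnSet (St : Set (Fin n → ℝ))) :
    sgnSet (S : Set (Fin n → ℝ)) ∩ sgnSet (perpSet (St : Set (Fin n → ℝ))) = {0} ∧
    (∀ cstar c' : Fin n → ℝ, (∀ i, 0 < cstar i) → (∀ i, 0 < c' i) →
      Set.Subsingleton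
        ({c : Fin n → ℝ | (∃ u ∈ S, c = c' + u) ∧ ∀ i, 0 ≤ c i} ∩
         {c : Fin n → ℝ | ∃ v ∈ perpSet (St : Set (Fin n → ℝ)),
            c = fun i => cstar i * Real.exp (v i)})) := by
  constructor
  · ext τ
    constructor
    · rintro ⟨⟨u, hu, huτ⟩, ⟨v, hv, hvτ⟩⟩
      have hsgn : sgn u = sgn v := by rw [huτ, hvτ]
      have hu0 : u = 0 := key_lemma S St h hu hv hsgn
      simp only [Set.mem_singleton_iff]
      rw [← huτ, hu0]
      funext i; simp [sgn]
    · rintro rfl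
      refine ⟨⟨0, S.zero_mem, ?_⟩, ⟨0, ?_, ?_⟩⟩
      · funext i; simp [sgn]
      · intro x _; simp [dotp]
      · funext i; simp [sgn]
  · intro cstar c' hcstar hc'
    rintro c₁ ⟨⟨⟨u₁, hu₁, hc₁⟩, _⟩, ⟨v₁, hv₁, he₁⟩⟩ c₂ ⟨⟨⟨u₂, hu₂, hc₂⟩, _⟩, ⟨v₂, hv₂, he₂⟩⟩
    have huS : u₁ - u₂ ∈ S := S.sub_mem hu₁ hu₂
    have hvP : (v₁ - v₂) ∈ perpSet (St : Set (Fin n → ℝ)) := by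
      intro x hx
      have e1 := hv₁ x hx
      have e2 := hv₂ x hx
      simp only [dotp] at e1 e2 ⊢
      have : ∑ i, x i * (v₁ - v₂) i = (∑ i, x i * v₁ i) - ∑ i, x i * v₂ i := by
        rw [← Finset.sum_sub_distrib]
        congr 1; funext i; simp [Pi.sub_apply]; ring
      rw [this, e1, e2, sub_zero]
    have hdiff : ∀ i, (u₁ - u₂) i = cstar i * (Real.exp (v₁ i) - Real.exp (v₂ i)) := by
      intro i
      have : c₁ i - c₂ i = (u₁ - u₂) i := by
        rw [hc₁, hc₂]; simp [Pi.add_apply]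
      rw [← this, he₁, he₂]; ring
    have hsgn : sgn (u₁ - u₂) = sgn (v₁ - v₂) := by
      funext i
      simp only [sgn, Pi.sub_apply]
      rcases lt_trichotomy (v₁ i) (v₂ i) with hlt | heq | hgt
      · have h1 : (u₁ - u₂) i < 0 := by
          rw [hdiff i]
          exact mul_neg_of_pos_of_neg (hcstar i) (by simp [Real.exp_lt_exp.mpr hlt])
        rw [show (u₁ - u₂) i = u₁ i - u₂ i from rfl] at h1
        rw [Real.sign_of_neg h1, Real.sign_of_neg (by linarith)]
      · rw [heq]
        have h1 : u₁ i - u₂ i = 0 := by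
          have := hdiff i
          simp only [Pi.sub_apply] at this
          rw [this, heq]; ring
        rw [h1]; simp
      · have h1 : (u₁ - u₂) i > 0 := by
          rw [hdiff i]
          exact mul_pos (hcstar i) (by simp [Real.exp_lt_exp.mpr hgt])
        rw [show (u₁ - u₂) i = u₁ i - u₂ i from rfl] at h1
        rw [Real.sign_of_pos h1, Real.sign_of_pos (by linarith)]
    have hu0 : u₁ - u₂ = 0 := key_lemma S St h huS hvP hsgn
    rw [hc₁, hc₂]
    have : u₁ = u₂ := by
      have := sub_eq_zero.mp hu0; exact this
    rw [this]
end

section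
/- Two sign vectors ς, τ ∈ {-1,0,1}ⁿ are orthogonal (meaning either ς_k τ_k = 0 for all k, or there exist indices k, l with ς_k τ_k = -1 and ς_l τ_l = +1) if and only if there exist vectors x, y ∈ ℝⁿ with ⟨x, y⟩ = 0, σ(x) = ς, and σ(y) = τ. -/
open Finset

lemma mySignMul (a b : ℝ) : Real.sign (a * b) = Real.sign a * Real.sign b := by
  rcases lt_trichotomy a 0 with ha|ha|ha <;> rcases lt_trichotomy b 0 with hb|hb|hb <;>
    first
      | (rw [Real.sign_of_pos (mul_pos_of_neg_of_neg ha hb), Real.sign_of_neg ha,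
          Real.sign_of_neg hb]; ring)
      | (rw [Real.sign_of_neg (mul_neg_of_neg_of_pos ha hb), Real.sign_of_neg ha,
          Real.sign_of_pos hb]; ring)
      | (rw [Real.sign_of_neg (mul_neg_of_pos_of_neg ha hb), Real.sign_of_pos ha,
          Real.sign_of_neg hb]; ring)
      | (rw [Real.sign_of_pos (mul_pos ha hb), Real.sign_of_pos ha, Real.sign_of_pos hb]; ring)
      | (subst ha; simp)
      | (subst hb; simp)

lemma mySignFix {a : ℝ} (h : a = -1 ∨ a = 0 ∨ a = 1) : Real.sign a = a := by
  rcases h with h|h|h <;> rw [h]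
  · exact Real.sign_of_neg (by norm_num)
  · exact Real.sign_zero
  · exact Real.sign_one

theorem stmt2 {n : ℕ} (ς τ : Fin n → ℝ)
    (hς : ∀ i, ς i = -1 ∨ ς i = 0 ∨ ς i = 1)
    (hτ : ∀ i, τ i = -1 ∨ τ i = 0 ∨ τ i = 1) :
    ((∀ k, ς k * τ k = 0) ∨ (∃ k l, ς k * τ k = -1 ∧ ς l * τ l = 1)) ↔
    ∃ x y : Fin n → ℝ, dotp x y = 0 ∧ sgn x = ς ∧ sgn y = τ := by
  constructor
  · rintro (h | ⟨k, l, hk, hl⟩)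
    · exact ⟨ς, τ, by simp [dotp, h], funext fun i => mySignFix (hς i),
        funext fun i => mySignFix (hτ i)⟩
    · set A : Finset (Fin n) := Finset.univ.filter (fun i => ς i * τ i = 1) with hA
      set B : Finset (Fin n) := Finset.univ.filter (fun i => ς i * τ i = -1) with hB
      have hlA : l ∈ A := by simp [hA, hl]
      have hkB : k ∈ B := by simp [hB, hk]
      have hp : (0:ℝ) < A.card := by
        have := Finset.card_pos.mpr ⟨l, hlA⟩; exact_mod_cast this
      have hm : (0:ℝ) < B.card := by
        have := Finset.card_pos.mpr ⟨k, hkB⟩; exact_mod_cast this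
      refine ⟨ς, fun i => if ς i * τ i = 1 then τ i * B.card else
          if ς i * τ i = -1 then τ i * A.card else τ i, ?_, ?_, ?_⟩
      · have key : ∀ i, ς i * (if ς i * τ i = 1 then τ i * (B.card:ℝ) else
            if ς i * τ i = -1 then τ i * A.card else τ i)
            = (if i ∈ A then (B.card:ℝ) else 0) + (if i ∈ B then -(A.card:ℝ) else 0) := by
          intro i
          by_cases h1 : ς i * τ i = 1
          · have h2 : ¬ (i ∈ B) := by
              simp only [hB, Finset.mem_filter, Finset.mem_univ, true_and, h1]; norm_num
            simp [h1, hA, h2, ← mul_assoc]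
          · by_cases h2 : ς i * τ i = -1
            · have h1' : ¬ (i ∈ A) := by
                simp only [hA, Finset.mem_filter, Finset.mem_univ, true_and, h2]; norm_num
              have h2' : i ∈ B := by simp [hB, h2]
              rw [if_neg h1, if_pos h2, if_neg h1', if_pos h2', ← mul_assoc, h2]
              ring
            · have h0 : ς i * τ i = 0 := by
                rcases hς i with a|a|a <;> rcases hτ i with b|b|b <;>
                  simp [a, b] at h1 h2 ⊢
              simp [h1, h2, hA, hB, h0]
        simp only [dotp, key, Finset.sum_add_distrib]
        rw [Finset.sum_ite_mem, Finset.sum_ite_mem, Finset.univ_inter, Finset.univ_inter]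
        simp [mul_comm]
      · exact funext fun i => mySignFix (hς i)
      · funext i
        have hsτ : Real.sign (τ i) = τ i := mySignFix (hτ i)
        simp only [sgn]
        by_cases h1 : ς i * τ i = 1
        · rw [if_pos h1, mySignMul, hsτ, Real.sign_of_pos hm, mul_one]
        · by_cases h2 : ς i * τ i = -1
          · rw [if_neg h1, if_pos h2, mySignMul, hsτ, Real.sign_of_pos hp, mul_one]
          · rw [if_neg h1, if_neg h2, hsτ]
  · rintro ⟨x, y, hxy, rfl, rfl⟩
    by_cases h : ∀ k, x k * y k = 0
    · left
      intro i
      simp only [sgn]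
      rw [← mySignMul, h i, Real.sign_zero]
    · right
      push_neg at h
      obtain ⟨k, hk⟩ := h
      rcases hk.lt_or_gt with hneg | hpos
      · have hex : ∃ l, 0 < x l * y l := by
          by_contra hc
          push_neg at hc
          have : ∑ i, x i * y i < 0 := by
            calc ∑ i, x i * y i < ∑ _i : Fin n, (0:ℝ) :=
              Finset.sum_lt_sum (fun i _ => hc i) ⟨k, Finset.mem_univ k, hneg⟩
            _ = 0 := by simp
          rw [dotp] at hxy; linarith
        obtain ⟨l, hl⟩ := hex
        refine ⟨k, l, ?_, ?_⟩
        · simp only [sgn]; rw [← mySignMul, Real.sign_of_neg hneg]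
        · simp only [sgn]; rw [← mySignMul, Real.sign_of_pos hl]
      · have hex : ∃ l, x l * y l < 0 := by
          by_contra hc
          push_neg at hc
          have : 0 < ∑ i, x i * y i := by
            calc (0:ℝ) = ∑ _i : Fin n, (0:ℝ) := by simp
            _ < ∑ i, x i * y i :=
              Finset.sum_lt_sum (fun i _ => hc i) ⟨k, Finset.mem_univ k, hpos⟩
          rw [dotp] at hxy; linarith
        obtain ⟨l, hl⟩ := hex
        refine ⟨l, k, ?_, ?_⟩
        · simp only [sgn]; rw [← mySignMul, Real.sign_of_neg hl]
        · simp only [sgn]; rw [← mySignMul, Real.sign_of_pos hpos]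
end

section
/- A directed graph on a finite vertex set C (with no self-loops, every vertex incident to at least one edge) is such that every connected component is strongly connected if and only if there exists a function k assigning a positive real to each edge with ∑_{(y,y') ∈ E} k(y,y') (ω_{y'} - ω_y) = 0, where ω_y denotes the standard basis vector of ℝ^C at vertex y. -/
open Finset

private lemma pathFlow {C : Type*} [Fintype C] [DecidableEq C] (E : Finset (C × C))
    {a b : C} (h : Relation.ReflTransGen (fun u v => (u, v) ∈ E) a b) :
    ∃ f : C × C → ℝ, (∀ e, 0 ≤ f e) ∧
      ∑ e ∈ E, f e • ((Pi.single e.2 1 : C → ℝ) - Pi.single e.1 1)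
        = Pi.single b 1 - Pi.single a 1 := by
  classical
  induction h with
  | refl => exact ⟨0, fun e => le_refl 0, by simp⟩
  | @tail c d hac hcd ih =>
    obtain ⟨f, hf0, hfsum⟩ := ih
    refine ⟨fun e => f e + if e = (c, d) then 1 else 0, ?_, ?_⟩
    · intro e
      have : (0:ℝ) ≤ if e = (c, d) then 1 else 0 := by split <;> norm_num
      exact add_nonneg (hf0 e) this
    · have h1 : ∑ e ∈ E, ((if e = (c, d) then (1:ℝ) else 0) •
          ((Pi.single e.2 1 : C → ℝ) - Pi.single e.1 1))
          = (Pi.single d 1 : C → ℝ) - Pi.single c 1 := by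
        rw [Finset.sum_eq_single (c, d)]
        · simp
        · intro e he hne; simp [hne]
        · intro habs; exact absurd hcd habs
      simp only [add_smul]
      rw [Finset.sum_add_distrib, hfsum, h1]
      abel

theorem stmt6 {C : Type*} [Fintype C] [DecidableEq C] (E : Finset (C × C))
    (hloop : ∀ y : C, (y, y) ∉ E)
    (hinc : ∀ y : C, ∃ y', (y, y') ∈ E ∨ (y', y) ∈ E) :
    (∀ a b : C,
        Relation.ReflTransGen (fun u v => (u, v) ∈ E ∨ (v, u) ∈ E) a b →
        Relation.ReflTransGen (fun u v => (u, v) ∈ E) a b) ↔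
    ∃ k : C × C → ℝ, (∀ e ∈ E, 0 < k e) ∧
      ∑ e ∈ E, k e • ((Pi.single e.2 1 : C → ℝ) - Pi.single e.1 1) = 0 := by
  classical
  constructor
  · intro hwr
    have hE : ∀ e : C × C, ∃ f : C × C → ℝ, (∀ e', 0 ≤ f e') ∧
        (e ∈ E → ∑ e' ∈ E, f e' • ((Pi.single e'.2 1 : C → ℝ) - Pi.single e'.1 1)
          = Pi.single e.1 1 - Pi.single e.2 1) := by
      intro e
      by_cases he : e ∈ E
      · obtain ⟨f, hf0, hfsum⟩ := pathFlow E
          (hwr e.2 e.1 (Relation.ReflTransGen.single (Or.inr he)))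
        exact ⟨f, hf0, fun _ => hfsum⟩
      · exact ⟨0, fun _ => le_refl 0, fun h => absurd h he⟩
    choose f hf0 hfsum using hE
    refine ⟨fun e' => ∑ e ∈ E, ((if e' = e then 1 else 0) + f e e'), ?_, ?_⟩
    · intro e0 he0
      apply Finset.sum_pos'
      · intro e he
        have : (0:ℝ) ≤ if e0 = e then 1 else 0 := by split <;> norm_num
        exact add_nonneg this (hf0 e e0)
      · refine ⟨e0, he0, ?_⟩
        have : (0:ℝ) < 1 + f e0 e0 := by linarith [hf0 e0 e0]
        simpa using this
    · have : ∀ e' ∈ E, (∑ e ∈ E, ((if e' = e then (1:ℝ) else 0) + f e e')) •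
          ((Pi.single e'.2 1 : C → ℝ) - Pi.single e'.1 1)
          = ∑ e ∈ E, (((if e' = e then (1:ℝ) else 0) + f e e') •
            ((Pi.single e'.2 1 : C → ℝ) - Pi.single e'.1 1)) := by
        intro e' _; rw [Finset.sum_smul]
      rw [Finset.sum_congr rfl this, Finset.sum_comm]
      rw [Finset.sum_eq_zero]
      intro e he
      simp only [add_smul]
      rw [Finset.sum_add_distrib, hfsum e he]
      have h1 : ∑ e' ∈ E, ((if e' = e then (1:ℝ) else 0) •
          ((Pi.single e'.2 1 : C → ℝ) - Pi.single e'.1 1))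
          = (Pi.single e.2 1 : C → ℝ) - Pi.single e.1 1 := by
        rw [Finset.sum_eq_single e]
        · simp
        · intro x hx hne; simp [hne]
        · intro habs; exact absurd he habs
      rw [h1]
      abel
  · rintro ⟨k, hk, hsum⟩ a b hab
    set S : Set C := {v | Relation.ReflTransGen (fun u v => (u, v) ∈ E) a v} with hS
    let g : C → ℝ := fun v => if v ∈ S then 1 else 0
    have hfor : ∀ u v : C, (u, v) ∈ E → u ∈ S → v ∈ S := by
      intro u v he hu
      exact hu.tail he
    have h0 : ∀ v, ∑ e ∈ E, k e * ((Pi.single e.2 1 : C → ℝ) v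
        - (Pi.single e.1 1 : C → ℝ) v) = 0 := by
      intro v
      have := congrFun hsum v
      simpa [Finset.sum_apply, smul_eq_mul] using this
    have key : ∑ e ∈ E, k e * (g e.2 - g e.1) = 0 := by
      have hrepr : ∀ y : C, g y = ∑ v, (Pi.single y 1 : C → ℝ) v * g v := by
        intro y
        rw [Finset.sum_eq_single y]
        · simp
        · intro v _ hne; simp [Pi.single_apply, Ne.symm hne]
        · intro habs; exact absurd (Finset.mem_univ y) habs
      calc ∑ e ∈ E, k e * (g e.2 - g e.1)
          = ∑ e ∈ E, ∑ v, k e * ((Pi.single e.2 1 : C → ℝ) v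
              - (Pi.single e.1 1 : C → ℝ) v) * g v := by
            refine Finset.sum_congr rfl fun e _ => ?_
            rw [hrepr e.2, hrepr e.1]
            rw [← Finset.sum_sub_distrib, Finset.mul_sum]
            refine Finset.sum_congr rfl fun v _ => ?_
            ring
        _ = ∑ v, (∑ e ∈ E, k e * ((Pi.single e.2 1 : C → ℝ) v
              - (Pi.single e.1 1 : C → ℝ) v)) * g v := by
            rw [Finset.sum_comm]
            refine Finset.sum_congr rfl fun v _ => ?_
            rw [Finset.sum_mul]
        _ = 0 := by
            refine Finset.sum_eq_zero fun v _ => ?_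
            rw [h0 v, zero_mul]
    have tnn : ∀ e ∈ E, 0 ≤ k e * (g e.2 - g e.1) := by
      intro e he
      by_cases h1 : e.1 ∈ S
      · have h2 : e.2 ∈ S := hfor e.1 e.2 (by simpa using he) h1
        simp [g, h1, h2]
      · simp only [g, h1, if_neg, if_false]
        by_cases h2 : e.2 ∈ S
        · simp only [h2, if_true]
          have := hk e he
          nlinarith
        · simp [h2]
    have hzero := (Finset.sum_eq_zero_iff_of_nonneg tnn).mp key
    have hback : ∀ u v : C, (u, v) ∈ E → v ∈ S → u ∈ S := by
      intro u v he hv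
      by_contra hu
      have := hzero (u, v) he
      simp only [g, hv, if_true, hu, if_false, sub_zero, mul_one] at this
      exact absurd this (ne_of_gt (hk (u, v) he))
    have hbS : b ∈ S := by
      clear hsum h0 key hzero tnn
      induction hab with
      | refl => exact Relation.ReflTransGen.refl
      | @tail c d hac hcd ih =>
        rcases hcd with h | h
        · exact hfor c d h ih
        · exact hback d c h ih
    exact hbS
end

section
/- Let V = (v¹,…,v^d) ∈ ℝ^{n×d} and Ṽ = (ṽ¹,…,ṽ^{d̃}) ∈ ℝ^{n×d̃} be full-rank matrices with rows w¹,…,wⁿ ∈ ℝ^d and w̃¹,…,w̃ⁿ ∈ ℝ^{d̃} respectively, and fix c* ∈ ℝⁿ with c* > 0. Define F : ℝ^{d̃} → ℝ^d by F(λ) = ∑_{k=1}^{n} c*_k e^{⟨λ, w̃^k⟩} w^k. Then F is injective for every choice of c* > 0 if and only if σ(im(V)^⊥) ∩ σ(im(Ṽ)) = {0}. -/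
open Finset

lemma sign_pos_mul (c t : ℝ) (hc : 0 < c) : Real.sign (c * t) = Real.sign t := by
  rcases lt_trichotomy t 0 with h|h|h
  · rw [Real.sign_of_neg h, Real.sign_of_neg (mul_neg_of_pos_of_neg hc h)]
  · simp [h]
  · rw [Real.sign_of_pos h, Real.sign_of_pos (mul_pos hc h)]

lemma sign_exp_sub (a b : ℝ) : Real.sign (Real.exp a - Real.exp b) = Real.sign (a - b) := by
  rcases lt_trichotomy a b with h|h|h
  · rw [Real.sign_of_neg (sub_neg.mpr h),
      Real.sign_of_neg (sub_neg.mpr (Real.exp_lt_exp.mpr h))]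
  · simp [h]
  · rw [Real.sign_of_pos (sub_pos.mpr h),
      Real.sign_of_pos (sub_pos.mpr (Real.exp_lt_exp.mpr h))]

lemma same_sign_neg {a b : ℝ} (h : Real.sign a = Real.sign b) (ha : a < 0) : b < 0 := by
  rcases lt_trichotomy b 0 with hb|hb|hb
  · exact hb
  · rw [Real.sign_of_neg ha, hb, Real.sign_zero] at h; norm_num at h
  · rw [Real.sign_of_neg ha, Real.sign_of_pos hb] at h; norm_num at h

lemma same_sign_pos {a b : ℝ} (h : Real.sign a = Real.sign b) (ha : 0 < a) : 0 < b := by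
  rcases lt_trichotomy b 0 with hb|hb|hb
  · rw [Real.sign_of_pos ha, Real.sign_of_neg hb] at h; norm_num at h
  · rw [Real.sign_of_pos ha, hb, Real.sign_zero] at h; norm_num at h
  · exact hb

lemma mem_perp_iff {n d : ℕ} (V : Matrix (Fin n) (Fin d) ℝ) (z : Fin n → ℝ) :
    z ∈ perpSet ((LinearMap.range V.mulVecLin : Submodule ℝ (Fin n → ℝ)) : Set (Fin n → ℝ)) ↔
      ∑ k, z k • V k = 0 := by
  have key : ∀ u : Fin d → ℝ, dotp (V.mulVec u) z = ∑ j, u j * (∑ k, z k * V k j) := by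
    intro u
    simp only [dotp, Matrix.mulVec, dotProduct, Finset.sum_mul, Finset.mul_sum]
    rw [Finset.sum_comm]
    refine Finset.sum_congr rfl fun j _ => Finset.sum_congr rfl fun k _ => by ring
  constructor
  · intro hz
    funext j
    have hmem : V.mulVec (Pi.single j 1 : Fin d → ℝ) ∈
        ((LinearMap.range V.mulVecLin : Submodule ℝ (Fin n → ℝ)) : Set (Fin n → ℝ)) := by
      exact ⟨(Pi.single j 1 : Fin d → ℝ), by simp [Matrix.mulVecLin_apply]⟩
    have h := hz _ hmem
    rw [key] at h
    have heq : ∑ j', (Pi.single j 1 : Fin d → ℝ) j' * (∑ k, z k * V k j')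
        = ∑ k, z k * V k j := by
      rw [Finset.sum_eq_single j]
      · simp
      · intro b _ hb; simp [Pi.single_eq_of_ne hb]
      · simp
    rw [heq] at h
    simpa [Finset.sum_apply] using h
  · intro hz x hx
    obtain ⟨u, rfl⟩ := hx
    rw [Matrix.mulVecLin_apply, key]
    have hcol : ∀ j, ∑ k, z k * V k j = 0 := by
      intro j
      have := congrFun hz j
      simpa [Finset.sum_apply] using this
    simp [hcol]

lemma vt_inj {n dt : ℕ} (Vt : Matrix (Fin n) (Fin dt) ℝ) (hVt : Vt.rank = dt) :
    Function.Injective Vt.mulVecLin := by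
  rw [← LinearMap.ker_eq_bot]
  have h := LinearMap.finrank_range_add_finrank_ker Vt.mulVecLin
  rw [show Module.finrank ℝ (LinearMap.range Vt.mulVecLin) = Vt.rank from rfl, hVt,
    Module.finrank_pi] at h
  have h0 : Module.finrank ℝ (LinearMap.ker Vt.mulVecLin) = 0 := by simpa using h
  exact Submodule.finrank_eq_zero.mp h0

theorem stmt8 {n d dt : ℕ} (V : Matrix (Fin n) (Fin d) ℝ) (Vt : Matrix (Fin n) (Fin dt) ℝ)
    (hV : V.rank = d) (hVt : Vt.rank = dt) :
    (∀ cstar : Fin n → ℝ, (∀ i, 0 < cstar i) →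
      Function.Injective (fun lam : Fin dt → ℝ =>
        ∑ k, (cstar k * Real.exp (dotp lam (Vt k))) • V k)) ↔
    sgnSet (perpSet ((LinearMap.range V.mulVecLin : Submodule ℝ (Fin n → ℝ)) : Set (Fin n → ℝ))) ∩
      sgnSet ((LinearMap.range Vt.mulVecLin : Submodule ℝ (Fin n → ℝ)) : Set (Fin n → ℝ)) = {0} := by
  have hdot : ∀ (lam : Fin dt → ℝ) (k : Fin n), dotp lam (Vt k) = Vt.mulVec lam k := by
    intro lam k
    simp [dotp, Matrix.mulVec, dotProduct, mul_comm]
  constructor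
  · intro hinj
    apply Set.eq_of_subset_of_subset
    · rintro s ⟨⟨y, hy, rfl⟩, ⟨x, hx, hsx⟩⟩
      rw [SetLike.mem_coe, LinearMap.mem_range] at hx
      obtain ⟨mu, rfl⟩ := hx
      rw [Matrix.mulVecLin_apply] at hsx
      set x : Fin n → ℝ := Vt.mulVec mu with hxdef
      classical
      set c : Fin n → ℝ := fun k => if x k = 0 then 1 else y k / (Real.exp (x k) - 1) with hc
      have hsge : ∀ k, Real.sign (x k) = Real.sign (y k) := fun k => congrFun hsx k
      have hcpos : ∀ k, 0 < c k := by
        intro k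
        rw [hc]
        by_cases h : x k = 0
        · simp [h]
        · simp only [h, if_false]
          rcases lt_or_gt_of_ne h with hlt|hgt
          · have hy' : y k < 0 := same_sign_neg (hsge k) hlt
            have hexp : Real.exp (x k) < 1 := by
              rw [show (1:ℝ) = Real.exp 0 by simp]
              exact Real.exp_lt_exp.mpr hlt
            exact div_pos_of_neg_of_neg hy' (by linarith)
          · have hy' : 0 < y k := same_sign_pos (hsge k) hgt
            have hexp : (1:ℝ) < Real.exp (x k) := by
              rw [show (1:ℝ) = Real.exp 0 by simp]
              exact Real.exp_lt_exp.mpr hgt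
            exact div_pos hy' (by linarith)
      have hcy : ∀ k, c k * (Real.exp (x k) - 1) = y k := by
        intro k
        rw [hc]
        by_cases h : x k = 0
        · have hyk : y k = 0 := by
            have := hsge k
            rw [h, Real.sign_zero, eq_comm, Real.sign_eq_zero_iff] at this
            exact this
          simp [h, hyk]
        · simp only [h, if_false]
          have hne : Real.exp (x k) - 1 ≠ 0 := by
            intro hcon
            have h1 : Real.exp (x k) = Real.exp 0 := by
              rw [Real.exp_zero]; linarith [sub_eq_zero.mp hcon]
            exact h (Real.exp_injective h1)
          field_simp
      have hFeq : (∑ k, (c k * Real.exp (dotp mu (Vt k))) • V k)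
          = ∑ k, (c k * Real.exp (dotp (0 : Fin dt → ℝ) (Vt k))) • V k := by
        have hperp := (mem_perp_iff V y).mp hy
        have hsub : (∑ k, (c k * Real.exp (dotp mu (Vt k))) • V k)
            - ∑ k, (c k * Real.exp (dotp (0 : Fin dt → ℝ) (Vt k))) • V k
            = ∑ k, y k • V k := by
          rw [← Finset.sum_sub_distrib]
          refine Finset.sum_congr rfl fun k _ => ?_
          rw [← sub_smul]
          congr 1
          have h0 : dotp (0 : Fin dt → ℝ) (Vt k) = 0 := by simp [dotp]
          rw [hdot mu k, ← hxdef, h0, Real.exp_zero, ← hcy k]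
          ring
        rw [hperp] at hsub
        exact sub_eq_zero.mp hsub
      have hmu0 : mu = 0 := hinj c hcpos hFeq
      have hx0 : x = 0 := by rw [hxdef, hmu0]; simp [Matrix.mulVec]
      rw [← hsx, hx0]
      simp only [Set.mem_singleton_iff]
      funext k
      simp [sgn]
    · rintro s hs
      rw [Set.mem_singleton_iff] at hs
      subst hs
      constructor
      · refine ⟨0, fun x hx => by simp [dotp], ?_⟩
        funext k; simp [sgn]
      · exact ⟨0, Submodule.zero_mem _, by funext k; simp [sgn]⟩
  · intro hsign cstar hcpos lam1 lam2 hF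
    simp only at hF
    set z : Fin n → ℝ := fun k =>
      cstar k * (Real.exp (dotp lam1 (Vt k)) - Real.exp (dotp lam2 (Vt k))) with hz
    have hzperp : z ∈ perpSet ((LinearMap.range V.mulVecLin : Submodule ℝ (Fin n → ℝ)) :
        Set (Fin n → ℝ)) := by
      rw [mem_perp_iff]
      have hsub : ∑ k, z k • V k
          = (∑ k, (cstar k * Real.exp (dotp lam1 (Vt k))) • V k)
            - ∑ k, (cstar k * Real.exp (dotp lam2 (Vt k))) • V k := by
        rw [← Finset.sum_sub_distrib]
        refine Finset.sum_congr rfl fun k _ => ?_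
        rw [← sub_smul]
        congr 1
        rw [hz]
        ring
      rw [hsub, hF, sub_self]
    have hsgnz : sgn z = sgn (Vt.mulVec (lam1 - lam2)) := by
      funext k
      show Real.sign (z k) = Real.sign (Vt.mulVec (lam1 - lam2) k)
      rw [hz]
      simp only
      rw [sign_pos_mul _ _ (hcpos k), sign_exp_sub]
      congr 1
      rw [hdot, hdot, Matrix.mulVec_sub]
      simp
    have hmem : sgn z ∈ sgnSet (perpSet ((LinearMap.range V.mulVecLin :
          Submodule ℝ (Fin n → ℝ)) : Set (Fin n → ℝ))) ∩
        sgnSet ((LinearMap.range Vt.mulVecLin : Submodule ℝ (Fin n → ℝ)) : Set (Fin n → ℝ)) := by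
      refine ⟨⟨z, hzperp, rfl⟩, ⟨Vt.mulVec (lam1 - lam2), ?_, hsgnz.symm⟩⟩
      exact ⟨lam1 - lam2, by simp [Matrix.mulVecLin_apply]⟩
    rw [hsign, Set.mem_singleton_iff] at hmem
    have hz0 : z = 0 := by
      funext k
      have hk := congrFun hmem k
      exact Real.sign_eq_zero_iff.mp hk
    have hd : ∀ k, dotp lam1 (Vt k) = dotp lam2 (Vt k) := by
      intro k
      have hk := congrFun hz0 k
      rw [hz] at hk
      simp only [Pi.zero_apply] at hk
      rcases mul_eq_zero.mp hk with h|h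
      · exact absurd h (hcpos k).ne'
      · exact Real.exp_injective (sub_eq_zero.mp h)
    have hVeq : Vt.mulVec lam1 = Vt.mulVec lam2 := by
      funext k
      rw [← hdot, ← hdot]
      exact hd k
    exact vt_inj Vt hVt (by simpa [Matrix.mulVecLin_apply] using hVeq)
end

section
/- Let V ∈ ℝ^{n×d} have full rank d with rows w¹,…,wⁿ ∈ ℝ^d, and let c* ∈ ℝⁿ with c* > 0. Then the map F : ℝ^d → ℝ^d, F(λ) = ∑_{k=1}^n c*_k e^{⟨λ, w^k⟩} w^k, is a bijection (indeed a real analytic diffeomorphism) from ℝ^d onto the interior C° = { ∑_{k=1}^n c'_k w^k : c' ∈ ℝⁿ, c' > 0 } of the cone generated by w¹,…,wⁿ. -/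
open Finset

/-!
`F` is the gradient of the potential `λ ↦ ∑ c*_k e^{⟨λ, w^k⟩}`, which is strictly convex because
`V` is injective; hence `⟨F λ - F μ, λ - μ⟩ > 0` for `λ ≠ μ`, and `F` is injective. For `c' > 0`,
the function `λ ↦ ∑ (c*_k e^{⟨λ, w^k⟩} - c'_k ⟨λ, w^k⟩)` is coercive (each summand is coercive on
`ℝ`, and an injective linear map is proper), so it attains its minimum, and the vanishing of its
gradient there is the equation `F λ = ∑ c'_k w^k`.
-/

open Filter Matrix

theorem Matrix.mulVec_injective_of_rank_eq_card {K m n : Type*} [Field K] [Fintype m]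
    [Fintype n] {V : Matrix m n K} (hV : V.rank = Fintype.card n) :
    Function.Injective V.mulVec := by
  have h := LinearMap.finrank_range_add_finrank_ker V.mulVecLin
  rwa [Module.finrank_fintype_fun_eq_card, ← Matrix.rank, hV, add_eq_left,
    Submodule.finrank_eq_zero, LinearMap.ker_eq_bot] at h

theorem StrictMono.sub_mul_sub_pos {f : ℝ → ℝ} (hf : StrictMono f) {a b : ℝ} (h : a ≠ b) :
    0 < (f a - f b) * (a - b) := by
  rcases h.lt_or_gt with h | h
  · exact mul_pos_of_neg_of_neg (sub_neg.2 (hf h)) (sub_neg.2 h)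
  · exact mul_pos (sub_pos.2 (hf h)) (sub_pos.2 h)

theorem tendsto_mul_exp_sub_mul_cocompact {a b : ℝ} (ha : 0 < a) (hb : 0 < b) :
    Tendsto (fun s => a * Real.exp s - b * s) (cocompact ℝ) atTop := by
  rw [cocompact_eq_atBot_atTop, tendsto_sup]
  constructor
  · refine tendsto_atTop_mono (fun s => ?_) (tendsto_neg_atBot_atTop.const_mul_atTop hb)
    nlinarith [Real.exp_pos s]
  · have hexp : Tendsto (fun s : ℝ => Real.exp s / s) atTop atTop := by
      simpa using Real.tendsto_exp_div_pow_atTop 1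
    have h : Tendsto (fun s : ℝ => s * (a * (Real.exp s / s) - b)) atTop atTop :=
      tendsto_id.atTop_mul_atTop₀ ((hexp.const_mul_atTop ha).atTop_add tendsto_const_nhds)
    refine h.congr' ?_
    filter_upwards [eventually_ne_atTop 0] with s hs
    field_simp

theorem tendsto_sum_apply_cocompact {m : Type*} [Fintype m] {X : m → Type*}
    [∀ k, TopologicalSpace (X k)] [∀ k, Nonempty (X k)] {g : (k : m) → X k → ℝ}
    (hcont : ∀ k, Continuous (g k)) (hg : ∀ k, Tendsto (g k) (cocompact (X k)) atTop) :
    Tendsto (fun x : (k : m) → X k => ∑ k, g k (x k)) (cocompact _) atTop := by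
  classical
  choose b hb using fun k => (hcont k).exists_forall_le (hg k)
  rw [← coprodᵢ_cocompact, Filter.coprodᵢ, tendsto_iSup]
  intro i
  have hlower (x : (k : m) → X k) :
      g i (x i) + ∑ k ∈ univ.erase i, g k (b k) ≤ ∑ k, g k (x k) := by
    rw [← add_sum_erase _ _ (mem_univ i)]
    gcongr with k
    exact hb k _
  exact tendsto_atTop_mono hlower (tendsto_atTop_add_const_right _ _ ((hg i).comp tendsto_comap))

section Birch

variable {m n : Type*} [Fintype m] [Fintype n]

/-- `a ᵥ* V = ∑ k, a k • V k`, so this is `λ ↦ ∑ k, c k e^{⟨λ, w^k⟩} w^k` for the rows `w^k = V k`. -/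
noncomputable def birchMap (V : Matrix m n ℝ) (c : m → ℝ) (lam : n → ℝ) : n → ℝ :=
  (fun k => c k * Real.exp ((V *ᵥ lam) k)) ᵥ* V

theorem birchMap_injective {V : Matrix m n ℝ} (hV : Function.Injective V.mulVec) {c : m → ℝ}
    (hc : ∀ k, 0 < c k) : Function.Injective (birchMap V c) := by
  intro x y hxy
  by_contra hne
  obtain ⟨k, hk⟩ : ∃ k, (V *ᵥ x) k ≠ (V *ᵥ y) k := by
    by_contra! h
    exact hne (hV (funext h))
  have hpos : 0 < (birchMap V c x - birchMap V c y) ⬝ᵥ (x - y) := by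
    rw [birchMap, birchMap, ← sub_vecMul, ← dotProduct_mulVec, mulVec_sub]
    refine sum_pos' (fun i _ => ?_) ⟨k, mem_univ k, ?_⟩
    · simp only [Pi.sub_apply, ← mul_sub, mul_assoc]
      exact mul_nonneg (hc i).le
        ((Real.exp_monotone.monovary monotone_id).sub_mul_sub_nonneg _ _)
    · simp only [Pi.sub_apply, ← mul_sub, mul_assoc]
      exact mul_pos (hc k) (Real.exp_strictMono.sub_mul_sub_pos hk)
  rw [hxy, sub_self, zero_dotProduct] at hpos
  exact hpos.false

theorem analyticOnNhd_birchMap (V : Matrix m n ℝ) (c : m → ℝ) :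
    AnalyticOnNhd ℝ (birchMap V c) Set.univ := by
  have hrow (k : m) : AnalyticOnNhd ℝ (fun lam : n → ℝ => (V *ᵥ lam) k) Set.univ :=
    ((ContinuousLinearMap.proj k).comp
      (LinearMap.toContinuousLinearMap V.mulVecLin)).analyticOnNhd _
  unfold birchMap
  simp_rw [vecMul_eq_sum]
  exact Finset.analyticOnNhd_fun_sum _ fun k _ =>
    (analyticOnNhd_const.mul (hrow k).rexp).smul analyticOnNhd_const

theorem vecMul_eq_zero_of_forall_sum_comp_mulVec_le {V : Matrix m n ℝ} {g g' : m → ℝ → ℝ}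
    (hg : ∀ k s, HasDerivAt (g k) (g' k s) s) {lam₀ : n → ℝ}
    (hmin : ∀ lam, ∑ k, g k ((V *ᵥ lam₀) k) ≤ ∑ k, g k ((V *ᵥ lam) k)) :
    (fun k => g' k ((V *ᵥ lam₀) k)) ᵥ* V = 0 := by
  set w := (fun k => g' k ((V *ᵥ lam₀) k)) ᵥ* V
  have hline : HasDerivAt (fun t : ℝ => ∑ k, g k ((V *ᵥ (lam₀ + t • w)) k)) (w ⬝ᵥ w) 0 := by
    simp only [mulVec_add, mulVec_smul, Pi.add_apply, Pi.smul_apply, smul_eq_mul]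
    rw [show w ⬝ᵥ w = ∑ k, g' k ((V *ᵥ lam₀) k) * (V *ᵥ w) k from
      (dotProduct_mulVec _ _ _).symm]
    refine HasDerivAt.fun_sum fun k _ => ?_
    simpa [Function.comp_def] using (hg k _).comp (0 : ℝ)
      (((hasDerivAt_id 0).mul_const ((V *ᵥ w) k)).const_add ((V *ᵥ lam₀) k))
  have hlocmin : IsLocalMin (fun t : ℝ => ∑ k, g k ((V *ᵥ (lam₀ + t • w)) k)) 0 :=
    Eventually.of_forall fun t => by simpa using hmin _
  exact dotProduct_self_eq_zero.1 (hlocmin.hasDerivAt_eq_zero hline)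

theorem exists_birchMap_eq_vecMul {V : Matrix m n ℝ} (hV : Function.Injective V.mulVec)
    {c c' : m → ℝ} (hc : ∀ k, 0 < c k) (hc' : ∀ k, 0 < c' k) :
    ∃ lam, birchMap V c lam = c' ᵥ* V := by
  set g : m → ℝ → ℝ := fun k s => c k * Real.exp s - c' k * s
  have hcont : Continuous fun lam : n → ℝ => ∑ k, g k ((V *ᵥ lam) k) := by
    simp only [g]
    fun_prop
  have hcoercive : Tendsto (fun lam : n → ℝ => ∑ k, g k ((V *ᵥ lam) k)) (cocompact _) atTop :=
    (tendsto_sum_apply_cocompact (fun k => by fun_prop) fun k =>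
      tendsto_mul_exp_sub_mul_cocompact (hc k) (hc' k)).comp
      (V.mulVecLin.isClosedEmbedding_of_injective (LinearMap.ker_eq_bot.2 hV)).tendsto_cocompact
  obtain ⟨lam, hlam⟩ := hcont.exists_forall_le hcoercive
  have hderiv (k : m) (s : ℝ) : HasDerivAt (g k) (c k * Real.exp s - c' k) s := by
    simpa using
      ((Real.hasDerivAt_exp s).const_mul (c k)).fun_sub ((hasDerivAt_id' s).const_mul (c' k))
  refine ⟨lam, ?_⟩
  rw [← sub_eq_zero, birchMap, ← sub_vecMul]
  exact vecMul_eq_zero_of_forall_sum_comp_mulVec_le hderiv hlam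

theorem range_birchMap {V : Matrix m n ℝ} (hV : Function.Injective V.mulVec) {c : m → ℝ}
    (hc : ∀ k, 0 < c k) :
    Set.range (birchMap V c) = {x | ∃ c' : m → ℝ, (∀ k, 0 < c' k) ∧ x = c' ᵥ* V} := by
  ext x
  constructor
  · rintro ⟨lam, rfl⟩
    exact ⟨_, fun k => mul_pos (hc k) (Real.exp_pos _), rfl⟩
  · rintro ⟨c', hc', rfl⟩
    exact exists_birchMap_eq_vecMul hV hc hc'

end Birch

theorem dotp_eq_mulVec_apply {n d : ℕ} (V : Matrix (Fin n) (Fin d) ℝ) (lam : Fin d → ℝ)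
    (k : Fin n) : dotp lam (V k) = (V *ᵥ lam) k :=
  dotProduct_comm _ _

theorem stmt11 {n d : ℕ} (V : Matrix (Fin n) (Fin d) ℝ) (hV : V.rank = d)
    (cstar : Fin n → ℝ) (hc : ∀ i, 0 < cstar i) :
    Function.Injective (fun lam : Fin d → ℝ =>
        ∑ k, (cstar k * Real.exp (dotp lam (V k))) • V k) ∧
    Set.range (fun lam : Fin d → ℝ =>
        ∑ k, (cstar k * Real.exp (dotp lam (V k))) • V k) =
      {x : Fin d → ℝ | ∃ c' : Fin n → ℝ, (∀ i, 0 < c' i) ∧ x = ∑ k, c' k • V k} ∧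
    AnalyticOn ℝ (fun lam : Fin d → ℝ =>
        ∑ k, (cstar k * Real.exp (dotp lam (V k))) • V k) Set.univ := by
  have hF : (fun lam : Fin d → ℝ => ∑ k, (cstar k * Real.exp (dotp lam (V k))) • V k) =
      birchMap V cstar := by
    funext lam
    simp only [birchMap, vecMul_eq_sum, dotp_eq_mulVec_apply]
  have hinj : Function.Injective V.mulVec :=
    V.mulVec_injective_of_rank_eq_card (by rw [hV, Fintype.card_fin])
  rw [hF]
  simp only [← vecMul_eq_sum]
  exact ⟨birchMap_injective hinj hc, range_birchMap hinj hc,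
    (analyticOnNhd_birchMap V cstar).analyticOn⟩
end

section
/- Let S, S̃ ⊆ ℝⁿ be linear subspaces with σ(S) = σ(S̃) and (+,…,+) ∈ σ(S^⊥), and let c* ∈ ℝⁿ with c* > 0. Then for every c' ∈ ℝⁿ with c' > 0, the set (c' + S) ∩ ℝⁿ_{≥0} ∩ { c* ∘ e^{ṽ} : ṽ ∈ S̃^⊥ } contains exactly one element. -/
open Finset

/-!
Uniqueness: if `c* ∘ e^v₁` and `c* ∘ e^v₂` lie in the same class `c' + S`, their difference
lies in `S` and has the signs of `v₁ - v₂ ∈ S̃^⊥`. Since `σ(S) ⊆ σ(S̃)`, some `z ∈ S̃` has these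
signs too, and then `z · (v₁ - v₂) > 0` unless `v₁ = v₂`.

Existence is a connectedness argument in the positive orthant `P`: the set of `p` whose class
`p + S` meets `{c* ∘ e^v : v ∈ S̃^⊥}` contains `c*`, is open, and is relatively closed in `P`.
Openness is the inverse function theorem for `v ↦ [c* ∘ e^v] : S̃^⊥ → ℝⁿ ⧸ S`: its derivative
`u ↦ [a ∘ u]` (`a > 0`) is injective by the sign argument, and bijective because `σ(S) = σ(S̃)`
forces `dim S = dim S̃`. Relative closedness is an a priori bound: a positive `w ∈ S^⊥` bounds
`c* ∘ e^v` from above, so solutions escaping to infinity have a limit direction `u ≤ 0`, `u ≠ 0`,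
in `S̃^⊥`, which is sign-compatible with a vector of `S` — impossible by the sign argument.
-/

open Filter Topology

lemma Real.mul_pos_of_sign_eq {x y : ℝ} (h : Real.sign x = Real.sign y) (hy : y ≠ 0) :
    0 < x * y := by
  rcases hy.lt_or_gt with hy | hy <;> rcases lt_trichotomy x 0 with hx | rfl | hx <;>
    simp_all [Real.sign_of_neg, Real.sign_of_pos, mul_pos_of_neg_of_neg] <;> norm_num at h

lemma Real.sign_mul_of_pos {a x : ℝ} (ha : 0 < a) : Real.sign (a * x) = Real.sign x := by
  rcases lt_trichotomy x 0 with hx | rfl | hx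
  · rw [Real.sign_of_neg hx, Real.sign_of_neg (mul_neg_of_pos_of_neg ha hx)]
  · simp
  · rw [Real.sign_of_pos hx, Real.sign_of_pos (mul_pos ha hx)]

lemma Real.sign_mul_exp_sub_mul_exp {c a b : ℝ} (hc : 0 < c) :
    Real.sign (c * Real.exp a - c * Real.exp b) = Real.sign (a - b) := by
  rw [← mul_sub, Real.sign_mul_of_pos hc]
  rcases lt_trichotomy a b with h | rfl | h
  · rw [Real.sign_of_neg (sub_neg.2 (Real.exp_lt_exp.2 h)), Real.sign_of_neg (sub_neg.2 h)]
  · simp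
  · rw [Real.sign_of_pos (sub_pos.2 (Real.exp_lt_exp.2 h)), Real.sign_of_pos (sub_pos.2 h)]

section

variable {n : ℕ}

noncomputable def perp (A : Submodule ℝ (Fin n → ℝ)) : Submodule ℝ (Fin n → ℝ) :=
  LinearMap.BilinForm.orthogonal (dotProductBilin ℝ ℝ) A

lemma mem_perp {A : Submodule ℝ (Fin n → ℝ)} {y : Fin n → ℝ} :
    y ∈ perp A ↔ y ∈ perpSet (A : Set (Fin n → ℝ)) := Iff.rfl

lemma finrank_perp (A : Submodule ℝ (Fin n → ℝ)) :
    Module.finrank ℝ (perp A) = n - Module.finrank ℝ A := by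
  have hB : (dotProductBilin ℝ ℝ : LinearMap.BilinForm ℝ (Fin n → ℝ)).Nondegenerate :=
    ⟨fun x hx => dotProduct_self_eq_zero.1 (hx x), fun x hx => dotProduct_self_eq_zero.1 (hx x)⟩
  rw [perp, LinearMap.BilinForm.finrank_orthogonal hB, Module.finrank_fin_fun]

-- A vector of `St` with the signs of `y` has positive dot product with `u`.
lemma eq_zero_of_sign_eq {S St : Submodule ℝ (Fin n → ℝ)}
    (hST : sgnSet (S : Set (Fin n → ℝ)) ⊆ sgnSet (St : Set (Fin n → ℝ)))
    {y u : Fin n → ℝ} (hy : y ∈ S) (hu : u ∈ perp St)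
    (hsign : ∀ i, u i ≠ 0 → Real.sign (y i) = Real.sign (u i)) : u = 0 := by
  obtain ⟨z, hz, hzy⟩ := hST ⟨y, hy, rfl⟩
  have hzu : ∀ i, u i ≠ 0 → 0 < z i * u i := fun i hi =>
    Real.mul_pos_of_sign_eq ((congrFun hzy i).trans (hsign i hi)) hi
  by_contra hne
  obtain ⟨j, hj⟩ := Function.ne_iff.1 hne
  have hpos : 0 < dotp z u := by
    refine Finset.sum_pos' (fun i _ => ?_) ⟨j, Finset.mem_univ j, hzu j hj⟩
    by_cases hi : u i = 0
    · simp [hi]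
    · exact (hzu i hi).le
  exact hpos.ne' (mem_perp.1 hu z hz)

-- Makes `(Fin n → ℝ) ⧸ S` a normed space.
instance Submodule.isClosed_fin_fun (S : Submodule ℝ (Fin n → ℝ)) :
    IsClosed (S : Set (Fin n → ℝ)) :=
  S.closed_of_finiteDimensional

noncomputable def mulExp (c v : Fin n → ℝ) : Fin n → ℝ := fun i => c i * Real.exp (v i)

lemma mulExp_pos {c : Fin n → ℝ} (hc : ∀ i, 0 < c i) (v : Fin n → ℝ) (i : Fin n) :
    0 < mulExp c v i :=
  mul_pos (hc i) (Real.exp_pos _)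

@[simp]
lemma mulExp_zero (c : Fin n → ℝ) : mulExp c 0 = c := by
  funext i
  simp [mulExp]

lemma hasStrictFDerivAt_mulExp (c v : Fin n → ℝ) :
    HasStrictFDerivAt (mulExp c) (ContinuousLinearMap.mul ℝ (Fin n → ℝ) (mulExp c v)) v := by
  have h : HasStrictFDerivAt (mulExp c)
      (ContinuousLinearMap.pi fun i => mulExp c v i • ContinuousLinearMap.proj i) v :=
    hasStrictFDerivAt_pi.2 fun i => by
      have := ((Real.hasStrictDerivAt_exp (v i)).comp_hasStrictFDerivAt v
        (hasStrictFDerivAt_apply (𝕜 := ℝ) i v)).const_mul (c i)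
      rwa [smul_smul] at this
  exact h.congr_fderiv (ContinuousLinearMap.ext fun x => funext fun i => by simp)

lemma continuous_mulExp (c : Fin n → ℝ) : Continuous (mulExp c) :=
  continuous_iff_continuousAt.2 fun v => (hasStrictFDerivAt_mulExp c v).continuousAt

section
variable {S St : Submodule ℝ (Fin n → ℝ)}

lemma eq_of_mulExp_sub_mulExp_mem
    (hST : sgnSet (S : Set (Fin n → ℝ)) ⊆ sgnSet (St : Set (Fin n → ℝ)))
    {c v₁ v₂ : Fin n → ℝ} (hc : ∀ i, 0 < c i) (hv₁ : v₁ ∈ perp St) (hv₂ : v₂ ∈ perp St)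
    (h : mulExp c v₁ - mulExp c v₂ ∈ S) : v₁ = v₂ :=
  sub_eq_zero.1 <| eq_zero_of_sign_eq hST h (sub_mem hv₁ hv₂) fun i _ =>
    Real.sign_mul_exp_sub_mul_exp (hc i)

variable (S St) in
noncomputable def quotMul (a : Fin n → ℝ) : perp St →L[ℝ] (Fin n → ℝ) ⧸ S :=
  S.mkQL ∘L ContinuousLinearMap.mul ℝ (Fin n → ℝ) a ∘L (perp St).subtypeL

lemma quotMul_injective (hST : sgnSet (S : Set (Fin n → ℝ)) ⊆ sgnSet (St : Set (Fin n → ℝ)))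
    {a : Fin n → ℝ} (ha : ∀ i, 0 < a i) : Function.Injective (quotMul S St a) := by
  refine (injective_iff_map_eq_zero _).2 fun u hu => Subtype.ext ?_
  refine eq_zero_of_sign_eq hST ((Submodule.Quotient.mk_eq_zero S).1 hu) u.2 fun i _ => ?_
  exact Real.sign_mul_of_pos (ha i)

lemma finrank_le_of_sgnSet_subset
    (hST : sgnSet (S : Set (Fin n → ℝ)) ⊆ sgnSet (St : Set (Fin n → ℝ))) :
    Module.finrank ℝ S ≤ Module.finrank ℝ St := by
  have h := LinearMap.finrank_le_finrank_of_injective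
    (quotMul_injective hST (a := 1) fun _ => one_pos)
  have hS := S.finrank_quotient_add_finrank
  have hSt := St.finrank_le
  rw [finrank_perp, Module.finrank_fin_fun] at *
  omega

lemma quotMul_surjective (hsgn : sgnSet (S : Set (Fin n → ℝ)) = sgnSet (St : Set (Fin n → ℝ)))
    {a : Fin n → ℝ} (ha : ∀ i, 0 < a i) : Function.Surjective (quotMul S St a) := by
  refine (LinearMap.injective_iff_surjective_of_finrank_eq_finrank ?_).1
    (quotMul_injective hsgn.le ha)
  have hdim := (finrank_le_of_sgnSet_subset hsgn.le).antisymm (finrank_le_of_sgnSet_subset hsgn.ge)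
  have hS := S.finrank_quotient_add_finrank
  rw [finrank_perp, Module.finrank_fin_fun] at *
  omega

variable (S St) in
noncomputable def quotMulExp (c : Fin n → ℝ) (v : perp St) : (Fin n → ℝ) ⧸ S := S.mkQ (mulExp c v)

lemma hasStrictFDerivAt_quotMulExp (c : Fin n → ℝ) (v : perp St) :
    HasStrictFDerivAt (quotMulExp S St c) (quotMul S St (mulExp c v)) v :=
  S.mkQL.hasStrictFDerivAt.comp v
    ((hasStrictFDerivAt_mulExp c v).comp v (perp St).subtypeL.hasStrictFDerivAt)

lemma isOpen_range_quotMulExp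
    (hsgn : sgnSet (S : Set (Fin n → ℝ)) = sgnSet (St : Set (Fin n → ℝ)))
    {c : Fin n → ℝ} (hc : ∀ i, 0 < c i) : IsOpen (Set.range (quotMulExp S St c)) := by
  refine isOpen_iff_mem_nhds.2 ?_
  rintro _ ⟨v, rfl⟩
  rw [← (hasStrictFDerivAt_quotMulExp c v).map_nhds_eq_of_surj
    (LinearMap.range_eq_top.2 (quotMul_surjective hsgn (mulExp_pos hc v)))]
  exact range_mem_map

lemma mulExp_mul_le_dotp {c w v p : Fin n → ℝ} (hc : ∀ i, 0 < c i) (hw : w ∈ perp S)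
    (hwpos : ∀ i, 0 < w i) (h : mulExp c v - p ∈ S) (j : Fin n) :
    mulExp c v j * w j ≤ dotp p w := by
  have hdot : dotp (mulExp c v) w = dotp p w := by
    have := mem_perp.1 hw _ h
    rwa [dotp, ← dotProduct, sub_dotProduct, sub_eq_zero] at this
  rw [← hdot]
  exact Finset.single_le_sum (f := fun i => mulExp c v i * w i)
    (fun i _ => (mul_pos (mulExp_pos hc v i) (hwpos i)).le) (Finset.mem_univ j)

lemma Filter.Tendsto.dotp_const {p : ℕ → Fin n → ℝ} {p₀ : Fin n → ℝ}
    (hp : Tendsto p atTop (𝓝 p₀)) (w : Fin n → ℝ) :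
    Tendsto (fun k => dotp (p k) w) atTop (𝓝 (dotp p₀ w)) :=
  tendsto_finsetSum _ fun i _ => (tendsto_pi_nhds.1 hp i).mul_const (w i)

-- Coordinates with `u₀ i > 0` would violate `mulExp_mul_le_dotp`; where `u₀ i < 0` the solution
-- tends to `0 < p₀ i`, so `mulExp c (r k • u k) - p k ∈ S` eventually has the signs of `u₀`.
lemma eq_zero_of_tendsto_direction
    (hST : sgnSet (S : Set (Fin n → ℝ)) ⊆ sgnSet (St : Set (Fin n → ℝ)))
    {c w : Fin n → ℝ} (hc : ∀ i, 0 < c i) (hw : w ∈ perp S) (hwpos : ∀ i, 0 < w i)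
    {p : ℕ → Fin n → ℝ} {p₀ : Fin n → ℝ} (hp : Tendsto p atTop (𝓝 p₀)) (hp₀ : ∀ i, 0 < p₀ i)
    {r : ℕ → ℝ} (hr : Tendsto r atTop atTop)
    {u : ℕ → Fin n → ℝ} {u₀ : Fin n → ℝ} (hu : Tendsto u atTop (𝓝 u₀))
    (huSt : ∀ k, u k ∈ perp St) (hsol : ∀ k, mulExp c (r k • u k) - p k ∈ S) : u₀ = 0 := by
  have hu_i : ∀ i, Tendsto (fun k => u k i) atTop (𝓝 (u₀ i)) := tendsto_pi_nhds.1 hu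
  have hnonpos : ∀ i, u₀ i ≤ 0 := by
    intro i
    by_contra! hi
    have hexp : Tendsto (fun k => mulExp c (r k • u k) i * w i) atTop atTop :=
      ((Real.tendsto_exp_atTop.comp (hr.atTop_mul_pos hi (hu_i i))).const_mul_atTop
        (hc i)).atTop_mul_const (hwpos i)
    exact not_tendsto_atTop_of_tendsto_nhds (hp.dotp_const w)
      (tendsto_atTop_mono (fun k => mulExp_mul_le_dotp hc hw hwpos (hsol k) i) hexp)
  have hneg : ∀ i, ∀ᶠ k in atTop, u₀ i < 0 → mulExp c (r k • u k) i < p k i := by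
    intro i
    refine eventually_imp_distrib_left.2 fun hi => ?_
    have hexp : Tendsto (fun k => mulExp c (r k • u k) i) atTop (𝓝 0) := by
      have := (Real.tendsto_exp_atBot.comp (hr.atTop_mul_neg hi (hu_i i))).const_mul (c i)
      rwa [mul_zero] at this
    exact hexp.eventually_lt (tendsto_pi_nhds.1 hp i) (hp₀ i)
  obtain ⟨k, hk⟩ := (eventually_all.2 hneg).exists
  have hu₀ : u₀ ∈ perp St :=
    (perp St).isClosed_fin_fun.mem_of_tendsto hu (Eventually.of_forall huSt)
  refine eq_zero_of_sign_eq hST (hsol k) hu₀ fun i hi => ?_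
  have hi' : u₀ i < 0 := (hnonpos i).lt_of_ne hi
  rw [Real.sign_of_neg hi', Pi.sub_apply, Real.sign_of_neg (sub_neg.2 (hk i hi'))]

lemma not_tendsto_norm_atTop
    (hST : sgnSet (S : Set (Fin n → ℝ)) ⊆ sgnSet (St : Set (Fin n → ℝ)))
    {c w : Fin n → ℝ} (hc : ∀ i, 0 < c i) (hw : w ∈ perp S) (hwpos : ∀ i, 0 < w i)
    {p : ℕ → Fin n → ℝ} {p₀ : Fin n → ℝ} (hp : Tendsto p atTop (𝓝 p₀)) (hp₀ : ∀ i, 0 < p₀ i)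
    {v : ℕ → Fin n → ℝ} (hvSt : ∀ k, v k ∈ perp St) (hsol : ∀ k, mulExp c (v k) - p k ∈ S) :
    ¬ Tendsto (fun k => ‖v k‖) atTop atTop := by
  intro hv
  set u : ℕ → Fin n → ℝ := fun k => ‖v k‖⁻¹ • v k
  have hu_sphere : ∀ᶠ k in atTop, u k ∈ Metric.sphere (0 : Fin n → ℝ) 1 :=
    (hv.eventually_gt_atTop 0).mono fun k hk => by simp [u, norm_smul, hk.ne']
  obtain ⟨u₀, hu₀, φ, hφ, hlim⟩ :=
    tendsto_subseq_of_frequently_bounded Metric.isBounded_sphere hu_sphere.frequently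
  rw [Metric.isClosed_sphere.closure_eq, mem_sphere_zero_iff_norm] at hu₀
  have hvu : ∀ k, ‖v k‖ • u k = v k := fun k => by
    by_cases h : v k = 0
    · simp [h]
    · simp [u, smul_smul, h]
  have := eq_zero_of_tendsto_direction hST hc hw hwpos (hp.comp hφ.tendsto_atTop) hp₀
    (hv.comp hφ.tendsto_atTop) hlim (fun k => (perp St).smul_mem _ (hvSt (φ k)))
    (fun k => by simpa only [Function.comp_apply, hvu] using hsol (φ k))
  simp [this] at hu₀

lemma exists_mulExp_sub_mem_of_tendsto
    (hST : sgnSet (S : Set (Fin n → ℝ)) ⊆ sgnSet (St : Set (Fin n → ℝ)))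
    {c w : Fin n → ℝ} (hc : ∀ i, 0 < c i) (hw : w ∈ perp S) (hwpos : ∀ i, 0 < w i)
    {p : ℕ → Fin n → ℝ} {p₀ : Fin n → ℝ} (hp : Tendsto p atTop (𝓝 p₀)) (hp₀ : ∀ i, 0 < p₀ i)
    (hsol : ∀ k, ∃ v ∈ perp St, mulExp c v - p k ∈ S) :
    ∃ v ∈ perp St, mulExp c v - p₀ ∈ S := by
  choose v hvSt hvS using hsol
  obtain ⟨R, hR⟩ : ∃ R, ∃ᶠ k in atTop, ‖v k‖ < R := by
    simpa only [tendsto_atTop, not_forall, not_eventually, not_le] using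
      not_tendsto_norm_atTop hST hc hw hwpos hp hp₀ hvSt hvS
  obtain ⟨v₀, -, φ, hφ, hlim⟩ := tendsto_subseq_of_frequently_bounded
    (Metric.isBounded_ball (x := (0 : Fin n → ℝ)) (r := R)) (hR.mono fun k hk => by simpa using hk)
  refine ⟨v₀, (perp St).isClosed_fin_fun.mem_of_tendsto hlim (Eventually.of_forall
    fun k => hvSt _), S.isClosed_fin_fun.mem_of_tendsto (((continuous_mulExp c).tendsto v₀).comp
    hlim |>.sub (hp.comp hφ.tendsto_atTop)) (Eventually.of_forall fun k => hvS _)⟩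

lemma exists_mulExp_sub_mem
    (hsgn : sgnSet (S : Set (Fin n → ℝ)) = sgnSet (St : Set (Fin n → ℝ)))
    {c w : Fin n → ℝ} (hc : ∀ i, 0 < c i) (hw : w ∈ perp S) (hwpos : ∀ i, 0 < w i)
    {p : Fin n → ℝ} (hp : ∀ i, 0 < p i) : ∃ v ∈ perp St, mulExp c v - p ∈ S := by
  set U : Set (Fin n → ℝ) := {p | ∃ v ∈ perp St, mulExp c v - p ∈ S}
  have hU : U = S.mkQ ⁻¹' Set.range (quotMulExp S St c) := by
    ext p
    simp [U, quotMulExp, Submodule.Quotient.eq]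
  have hUopen : IsOpen U := hU ▸ (isOpen_range_quotMulExp hsgn hc).preimage S.mkQL.continuous
  have hc_mem : c ∈ U := ⟨0, zero_mem _, by rw [mulExp_zero, sub_self]; exact zero_mem _⟩
  refine (isPreconnected_univ_pi fun _ => isPreconnected_Ioi).subset_of_closure_inter_subset
    hUopen ⟨c, fun i _ => hc i, hc_mem⟩ ?_ fun i _ => hp i
  rintro p₀ ⟨hp₀U, hp₀⟩
  obtain ⟨p, hpU, hlim⟩ := mem_closure_iff_seq_limit.1 hp₀U
  exact exists_mulExp_sub_mem_of_tendsto hsgn.le hc hw hwpos hlim (fun i => hp₀ i trivial) hpU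

end
end

theorem stmt13 {n : ℕ} (S St : Submodule ℝ (Fin n → ℝ))
    (hsgn : sgnSet (S : Set (Fin n → ℝ)) = sgnSet (St : Set (Fin n → ℝ)))
    (hplus : (fun _ => (1 : ℝ)) ∈ sgnSet (perpSet (S : Set (Fin n → ℝ))))
    (cstar : Fin n → ℝ) (hc : ∀ i, 0 < cstar i) :
    ∀ c' : Fin n → ℝ, (∀ i, 0 < c' i) →
      ∃! c : Fin n → ℝ,
        ((∃ u ∈ S, c = c' + u) ∧ ∀ i, 0 ≤ c i) ∧
        ∃ v ∈ perpSet (St : Set (Fin n → ℝ)), c = fun i => cstar i * Real.exp (v i) := by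
  intro c' hc'
  obtain ⟨w, hw, hw_one⟩ := hplus
  have hwpos : ∀ i, 0 < w i := fun i => by
    simpa using Real.mul_pos_of_sign_eq ((congrFun hw_one i).trans Real.sign_one.symm) one_ne_zero
  obtain ⟨v, hv, hvS⟩ := exists_mulExp_sub_mem hsgn hc (mem_perp.2 hw) hwpos hc'
  refine ⟨mulExp cstar v, ⟨⟨⟨_, hvS, (add_sub_cancel c' _).symm⟩,
    fun i => (mulExp_pos hc v i).le⟩, v, hv, rfl⟩, ?_⟩
  rintro _ ⟨⟨⟨u, hu, hcu⟩, -⟩, v', hv', rfl⟩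
  have hdiff : mulExp cstar v' - mulExp cstar v ∈ S := by
    rw [show mulExp cstar v' - mulExp cstar v = u - (mulExp cstar v - c') by
      rw [show mulExp cstar v' = c' + u from hcu]; abel]
    exact sub_mem hu hvS
  rw [eq_of_mulExp_sub_mulExp_mem hsgn.le hc hv' hv hdiff]
  rfl
end

section
/- Fix K > 0 and Σ_AC, Σ_BC > 0. The positive solutions ([A],[B],[C]) ∈ ℝ³_{>0} of the system K·[A]·[B] = [B]²·[C], [A] + [C] = Σ_AC, [B] + [C] = Σ_BC are in bijection with the roots x of the quadratic x² - (K + Σ_BC)x + K·Σ_AC = 0 satisfying 0 < x < min(Σ_AC, Σ_BC), via [C] = x, [A] = Σ_AC - x, [B] = Σ_BC - x. In particular, there exist parameter values (K, Σ_AC, Σ_BC) for which there are exactly two such positive solutions. -/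
open Finset

lemma bij_aux (K SAC SBC : ℝ) :
    Set.BijOn (fun x : ℝ => (SAC - x, SBC - x, x))
      {x : ℝ | x ^ 2 - (K + SBC) * x + K * SAC = 0 ∧ 0 < x ∧ x < min SAC SBC}
      {p : ℝ × ℝ × ℝ | 0 < p.1 ∧ 0 < p.2.1 ∧ 0 < p.2.2 ∧
        K * p.1 * p.2.1 = p.2.1 ^ 2 * p.2.2 ∧ p.1 + p.2.2 = SAC ∧ p.2.1 + p.2.2 = SBC} := by
  refine ⟨?_, ?_, ?_⟩
  · rintro x ⟨hq, hx0, hxm⟩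
    have h1 : x < SAC := lt_of_lt_of_le hxm (min_le_left _ _)
    have h2 : x < SBC := lt_of_lt_of_le hxm (min_le_right _ _)
    refine ⟨by simpa using h1, by simpa using h2, hx0, ?_, by ring, by ring⟩
    simp only
    nlinarith [hq]
  · rintro x ⟨hq, hx0, hxm⟩ y ⟨hq', hy0, hym⟩ h
    exact congrArg (fun p : ℝ × ℝ × ℝ => p.2.2) h
  · rintro ⟨a, b, c⟩ ⟨ha, hb, hc, heq, hac, hbc⟩
    refine ⟨c, ⟨?_, hc, ?_⟩, ?_⟩
    · simp only at *
      have key : K * a = b * c :=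
        mul_right_cancel₀ hb.ne' (by nlinarith [heq] : K * a * b = b * c * b)
      subst hac hbc
      linear_combination key
    · simp only at *
      exact lt_min (by linarith) (by linarith)
    · simp only at *
      simp [Prod.ext_iff]
      constructor <;> linarith

theorem stmt16 (K SAC SBC : ℝ) (hK : 0 < K) (hAC : 0 < SAC) (hBC : 0 < SBC) :
    Set.BijOn (fun x : ℝ => (SAC - x, SBC - x, x))
      {x : ℝ | x ^ 2 - (K + SBC) * x + K * SAC = 0 ∧ 0 < x ∧ x < min SAC SBC}
      {p : ℝ × ℝ × ℝ | 0 < p.1 ∧ 0 < p.2.1 ∧ 0 < p.2.2 ∧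
        K * p.1 * p.2.1 = p.2.1 ^ 2 * p.2.2 ∧ p.1 + p.2.2 = SAC ∧ p.2.1 + p.2.2 = SBC} ∧
    ∃ K' SAC' SBC' : ℝ, 0 < K' ∧ 0 < SAC' ∧ 0 < SBC' ∧
      Set.ncard {p : ℝ × ℝ × ℝ | 0 < p.1 ∧ 0 < p.2.1 ∧ 0 < p.2.2 ∧
        K' * p.1 * p.2.1 = p.2.1 ^ 2 * p.2.2 ∧ p.1 + p.2.2 = SAC' ∧ p.2.1 + p.2.2 = SBC'} = 2 := by
  refine ⟨bij_aux K SAC SBC, (1/2 : ℝ), 4, 5/2, by norm_num, by norm_num, by norm_num, ?_⟩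
  have hb := bij_aux (1/2 : ℝ) 4 (5/2)
  have hdom : {x : ℝ | x ^ 2 - ((1/2 : ℝ) + 5/2) * x + (1/2) * 4 = 0 ∧ 0 < x ∧ x < min (4:ℝ) (5/2)}
      = {1, 2} := by
    ext x
    simp only [Set.mem_setOf_eq, Set.mem_insert_iff, Set.mem_singleton_iff]
    constructor
    · rintro ⟨hq, hx0, hxm⟩
      have : (x - 1) * (x - 2) = 0 := by nlinarith
      rcases mul_eq_zero.mp this with h | h
      · left; linarith
      · right; linarith
    · rintro (rfl | rfl) <;> norm_num
  rw [← hb.image_eq, hdom, Set.ncard_image_of_injOn (hdom ▸ hb.injOn)]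
  rw [Set.ncard_insert_of_notMem (by norm_num), Set.ncard_singleton]
end
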